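/- arXiv:1710.03115 — 2 statements merged into one kernel-verified Lean document; each statement's English description precedes it below -/
import Mathlib

section
/- Let X be an I-continuous T0 space such that ↡_I E is irreducible for every irreducible subset E of X (where ↡_I E = ⋃_{e ∈ E} ↡_I e). Then the relation ≪_I has the interpolation property: whenever x ≪_I z, there exists y ∈ X with x ≪_I y and y ≪_I z. -/
universe u

/-- The specialisation order of a topological space: `x ≤ y` iff `x ∈ closure {y}`. -/
def sle {X : Type u} [TopologicalSpace X] (x y : X) : Prop :=
  x ∈ closure ({y} : Set X)

/-- Upper bounds with respect to the specialisation order. -/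
def sUB {X : Type u} [TopologicalSpace X] (A : Set X) : Set X :=
  {u | ∀ a ∈ A, sle a u}

/-- `s` is the least upper bound of `A` with respect to the specialisation order. -/
def sIsLUB {X : Type u} [TopologicalSpace X] (A : Set X) (s : X) : Prop :=
  s ∈ sUB A ∧ ∀ u ∈ sUB A, sle s u

/-- `x ≪_I y`: for every irreducible set `E` having a supremum above `y`,
some element of `E` is above `x`. -/
def IBelow {X : Type u} [TopologicalSpace X] (x y : X) : Prop :=
  ∀ E : Set X, IsIrreducible E → ∀ s : X, sIsLUB E s → sle y s → ∃ e ∈ E, sle x e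

/-- `X` is I-continuous: for every `y`, the set `↡_I y` is irreducible with
least upper bound `y`. -/
def IContinuous (X : Type u) [TopologicalSpace X] : Prop :=
  ∀ y : X, IsIrreducible {x | IBelow x y} ∧ sIsLUB {x | IBelow x y} y

/-- `X` is I-stable: `↟_I U` is open for every open `U`. -/
def IStable (X : Type u) [TopologicalSpace X] : Prop :=
  ∀ U : Set X, IsOpen U → IsOpen {x : X | ∃ a ∈ U, IBelow a x}

/-- `X` is sup-sober: every closed irreducible set with a supremum is the closure
of that supremum. -/
def SupSober (X : Type u) [TopologicalSpace X] : Prop :=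
  ∀ F : Set X, IsClosed F → IsIrreducible F → ∀ s : X, sIsLUB F s → F = closure ({s} : Set X)

/-- The collection σ_I: upper sets (w.r.t. specialisation) inaccessible by suprema of
irreducible sets. -/
def sigmaI (X : Type u) [TopologicalSpace X] : Set (Set X) :=
  {U | (∀ a ∈ U, ∀ b : X, sle a b → b ∈ U) ∧
       ∀ E : Set X, IsIrreducible E → ∀ s : X, sIsLUB E s → s ∈ U → (U ∩ E).Nonempty}

/-- The irreducibly derived topology τ_SI: open sets inaccessible by suprema of
irreducible sets. -/
def tauSI (X : Type u) [TopologicalSpace X] : Set (Set X) :=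
  {U | IsOpen U ∧ ∀ E : Set X, IsIrreducible E → ∀ s : X, sIsLUB E s → s ∈ U → (E ∩ U).Nonempty}

/-- The net `x` I-converges to `y`: there is an irreducible set `E` with a supremum above `y`,
all of whose elements are eventual lower bounds of the net. -/
def IConv {X : Type u} [TopologicalSpace X] {ι : Type u} [Preorder ι]
    (x : ι → X) (y : X) : Prop :=
  ∃ E : Set X, IsIrreducible E ∧
    (∀ e ∈ E, ∃ i₀ : ι, ∀ i : ι, i₀ ≤ i → sle e (x i)) ∧
    ∃ s : X, sIsLUB E s ∧ sle y s

/-- `D` is directed with respect to the specialisation order. -/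
def sDirectedOn {X : Type u} [TopologicalSpace X] (D : Set X) : Prop :=
  ∀ a ∈ D, ∀ b ∈ D, ∃ c ∈ D, sle a c ∧ sle b c

/-- Way-below in the specialisation poset, via nonempty directed sets. -/
def sWayBelow {X : Type u} [TopologicalSpace X] (x y : X) : Prop :=
  ∀ D : Set X, D.Nonempty → sDirectedOn D → ∀ s : X, sIsLUB D s → sle y s → ∃ d ∈ D, sle x d

/-- `X` is a DI space: the supremum of any irreducible set is also attained as the supremum
of a nonempty directed subset of its lower closure. -/
def DISpace (X : Type u) [TopologicalSpace X] : Prop :=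
  ∀ E : Set X, IsIrreducible E → ∀ s : X, sIsLUB E s →
    ∃ D : Set X, D.Nonempty ∧ sDirectedOn D ∧ (∀ d ∈ D, ∃ e ∈ E, sle d e) ∧ sIsLUB D s

/-- `U` is τ_I-open: every net that I-converges to a point of `U` is eventually in `U`. -/
def TauIOpen {X : Type u} [TopologicalSpace X] (U : Set X) : Prop :=
  ∀ (ι : Type u) [Preorder ι] [Nonempty ι],
    (∀ i j : ι, ∃ k : ι, i ≤ k ∧ j ≤ k) →
    ∀ x : ι → X, ∀ y ∈ U, IConv x y →
    ∃ i₀ : ι, ∀ i : ι, i₀ ≤ i → x i ∈ U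

section SpecialisationOrder

variable {X : Type u} [TopologicalSpace X]

lemma sle_iff_specializes {x y : X} : sle x y ↔ y ⤳ x :=
  specializes_iff_mem_closure.symm

lemma sle_refl (x : X) : sle x x :=
  subset_closure rfl

lemma sle_trans {x y z : X} (hxy : sle x y) (hyz : sle y z) : sle x z :=
  sle_iff_specializes.2 ((sle_iff_specializes.1 hyz).trans (sle_iff_specializes.1 hxy))

lemma sIsLUB_biUnion {E : Set X} {s : X} {A : X → Set X} (hE : sIsLUB E s)
    (hA : ∀ e ∈ E, sIsLUB (A e) e) : sIsLUB {a | ∃ e ∈ E, a ∈ A e} s := by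
  refine ⟨?_, fun u hu => hE.2 u fun e he => (hA e he).2 u fun a ha => hu a ⟨e, he, ha⟩⟩
  rintro a ⟨e, he, ha⟩
  exact sle_trans ((hA e he).1 a ha) (hE.1 e he)

lemma IBelow.mono_left {x x' y : X} (hxx' : sle x x') (h : IBelow x' y) : IBelow x y := by
  intro E hE s hs hys
  obtain ⟨e, he, hx'e⟩ := h E hE s hs hys
  exact ⟨e, he, sle_trans hxx' hx'e⟩

end SpecialisationOrder

theorem stmt12_general {X : Type u} [TopologicalSpace X]
    (hcont : IContinuous X)
    (hpres : ∀ E : Set X, IsIrreducible E → IsIrreducible {x : X | ∃ e ∈ E, IBelow x e})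
    (x z : X) (hxz : IBelow x z) :
    ∃ y : X, IBelow x y ∧ IBelow y z := by
  -- `↡_I (↡_I z)` is irreducible with supremum `z`, so `x ≪_I z` puts `x` below one of its points.
  have hirr := hpres _ (hcont z).1
  have hlub : sIsLUB {a | ∃ y ∈ {y | IBelow y z}, IBelow a y} z :=
    sIsLUB_biUnion (hcont z).2 fun y _ => (hcont y).2
  obtain ⟨a, ⟨y, hyz, hay⟩, hxa⟩ := hxz _ hirr z hlub (sle_refl z)
  exact ⟨y, hay.mono_left hxa, hyz⟩

/-- If `X` is I-continuous and `↡_I` preserves irreducibility, then `≪_I` interpolates. -/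
theorem stmt12 {X : Type u} [TopologicalSpace X] [T0Space X]
    (hcont : IContinuous X)
    (hpres : ∀ E : Set X, IsIrreducible E → IsIrreducible {x : X | ∃ e ∈ E, IBelow x e})
    (x z : X) (hxz : IBelow x z) :
    ∃ y : X, IBelow x y ∧ IBelow y z :=
  stmt12_general hcont hpres x z hxz
end

section
/- Let X be an I-continuous T0 space such that ↟_I x ∈ σ_I for every x ∈ X. Then: (a) for every net (x_i) in X and every y ∈ X, the net (x_i) I-converges to y if and only if for every U ∈ σ_I with y ∈ U, x_i ∈ U eventually; and (b) a subset U of X is τ_I-open (i.e., every net that I-converges to a point of U is eventually in U) if and only if U is a union of members of σ_I. -/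
/-!
The σ_I-sets are exactly what I-convergence cannot avoid: if `E` is irreducible with supremum
above `y ∈ U ∈ σ_I`, some `e ∈ E` lies in `U`, and a net eventually above `e` is eventually in
the upper set `U`. Conversely, if a net is eventually in every σ_I-neighbourhood of `y`, it is
eventually in each `↟_I e` with `e ≪_I y`, so `↡_I y` is an irreducible set of eventual lower
bounds with supremum `y`.

Since σ_I is closed under binary intersections, the points of σ_I-neighbourhoods of `y`, indexed
by the neighbourhoods under reverse inclusion, form a net that I-converges to `y`. A τ_I-open set
containing `y` contains this net from some index `(V, z)` on, hence contains all of `V`.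
-/

universe u

section

variable {X : Type u} [TopologicalSpace X]

lemma sle_rfl {x : X} : sle x x :=
  subset_closure rfl

lemma sle_trans_s16 {a b c : X} (hab : sle a b) (hbc : sle b c) : sle a c :=
  closure_minimal (Set.singleton_subset_iff.2 hbc) isClosed_closure hab

lemma IBelow.sle {x y : X} (h : IBelow x y) : sle x y := by
  have hlub : sIsLUB ({y} : Set X) y := ⟨fun a ha => ha ▸ sle_rfl, fun u hu => hu y rfl⟩
  obtain ⟨e, rfl, hxe⟩ := h {y} isIrreducible_singleton y hlub sle_rfl
  exact hxe

lemma sUB_eq_of_subset_of_subset_closure {A E : Set X} (hAE : A ⊆ E) (hEA : E ⊆ closure A) :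
    sUB E = sUB A := by
  ext u
  exact ⟨fun hu a ha => hu a (hAE ha),
    fun hu e he => closure_minimal (fun a ha => hu a ha) isClosed_closure (hEA he)⟩

lemma sIsLUB.of_subset_of_subset_closure {A E : Set X} {s : X} (hs : sIsLUB E s) (hAE : A ⊆ E)
    (hEA : E ⊆ closure A) : sIsLUB A s := by
  unfold sIsLUB
  rwa [← sUB_eq_of_subset_of_subset_closure hAE hEA]

lemma IsIrreducible.of_subset_of_subset_closure {A E : Set X} (hE : IsIrreducible E)
    (hAE : A ⊆ E) (hEA : E ⊆ closure A) : IsIrreducible A := by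
  rw [← isIrreducible_iff_closure,
    subset_antisymm (closure_mono hAE) (closure_minimal hEA isClosed_closure)]
  exact hE.closure

lemma sigmaI_univ : (Set.univ : Set X) ∈ sigmaI X :=
  ⟨fun _ _ _ _ => trivial, fun _ hE _ _ _ => by simpa using hE.nonempty⟩

/-- `E \ V` would be an irreducible set with the same supremum as `E`, yet missing `V`. -/
lemma not_subset_closure_diff_of_mem_sigmaI {V E : Set X} {s : X} (hV : V ∈ sigmaI X)
    (hE : IsIrreducible E) (hs : sIsLUB E s) (hsV : s ∈ V) : ¬E ⊆ closure (E \ V) := by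
  intro hEV
  obtain ⟨e, heV, -, heV'⟩ := hV.2 (E \ V) (hE.of_subset_of_subset_closure Set.sdiff_subset hEV) s
    (hs.of_subset_of_subset_closure Set.sdiff_subset hEV) hsV
  exact heV' heV

lemma sigmaI_inter {V W : Set X} (hV : V ∈ sigmaI X) (hW : W ∈ sigmaI X) :
    V ∩ W ∈ sigmaI X := by
  refine ⟨fun a ha b hab => ⟨hV.1 a ha.1 b hab, hW.1 a ha.2 b hab⟩, ?_⟩
  intro E hE s hs hsVW
  by_contra hdisj
  have hcover : E ⊆ closure (E \ V) ∪ closure (E \ W) := fun e he =>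
    (not_and_or.1 fun heVW => hdisj ⟨e, heVW, he⟩).imp
      (fun heV => subset_closure ⟨he, heV⟩) (fun heW => subset_closure ⟨he, heW⟩)
  rcases isPreirreducible_iff_isClosed_union_isClosed.1 hE.isPreirreducible _ _
    isClosed_closure isClosed_closure hcover with hEV | hEW
  · exact not_subset_closure_diff_of_mem_sigmaI hV hE hs hsVW.1 hEV
  · exact not_subset_closure_diff_of_mem_sigmaI hW hE hs hsVW.2 hEW

lemma IConv.eventually_mem {ι : Type u} [Preorder ι] {x : ι → X} {y : X} {U : Set X}
    (h : IConv x y) (hU : U ∈ sigmaI X) (hyU : y ∈ U) : ∃ i₀, ∀ i, i₀ ≤ i → x i ∈ U := by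
  obtain ⟨E, hE, hlb, s, hs, hys⟩ := h
  obtain ⟨e, heU, heE⟩ := hU.2 E hE s hs (hU.1 y hyU s hys)
  obtain ⟨i₀, hi₀⟩ := hlb e heE
  exact ⟨i₀, fun i hi => hU.1 e heU (x i) (hi₀ i hi)⟩

lemma iConv_of_eventually_mem (hcont : IContinuous X)
    (hsig : ∀ x : X, {z : X | IBelow x z} ∈ sigmaI X) {ι : Type u} [Preorder ι] {x : ι → X}
    {y : X} (h : ∀ U ∈ sigmaI X, y ∈ U → ∃ i₀, ∀ i, i₀ ≤ i → x i ∈ U) : IConv x y := by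
  refine ⟨{a | IBelow a y}, (hcont y).1, fun e hey => ?_, y, (hcont y).2, sle_rfl⟩
  obtain ⟨i₀, hi₀⟩ := h _ (hsig e) hey
  exact ⟨i₀, fun i hi => (hi₀ i hi).sle⟩

lemma tauIOpen_sUnion {S : Set (Set X)} (hS : S ⊆ sigmaI X) : TauIOpen (⋃₀ S) := by
  rintro ι _ _ - x y ⟨V, hVS, hyV⟩ hconv
  obtain ⟨i₀, hi₀⟩ := hconv.eventually_mem (hS hVS) hyV
  exact ⟨i₀, fun i hi => ⟨V, hVS, hi₀ i hi⟩⟩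

structure SigmaIPointedNbhd (y : X) where
  nbhd : Set X
  point : X
  nbhd_mem : nbhd ∈ sigmaI X
  mem_nbhd : y ∈ nbhd
  point_mem : point ∈ nbhd

namespace SigmaIPointedNbhd

variable {y : X}

instance : Preorder (SigmaIPointedNbhd y) where
  le p q := q.nbhd ⊆ p.nbhd
  le_refl _ := subset_rfl
  le_trans _ _ _ hpq hqr := hqr.trans hpq

lemma le_iff {p q : SigmaIPointedNbhd y} : p ≤ q ↔ q.nbhd ⊆ p.nbhd :=
  Iff.rfl

instance : Nonempty (SigmaIPointedNbhd y) :=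
  ⟨⟨Set.univ, y, sigmaI_univ, trivial, trivial⟩⟩

lemma directed (p q : SigmaIPointedNbhd y) : ∃ r, p ≤ r ∧ q ≤ r :=
  ⟨⟨p.nbhd ∩ q.nbhd, y, sigmaI_inter p.nbhd_mem q.nbhd_mem, ⟨p.mem_nbhd, q.mem_nbhd⟩,
    ⟨p.mem_nbhd, q.mem_nbhd⟩⟩, Set.inter_subset_left, Set.inter_subset_right⟩

lemma eventually_point_mem {U : Set X} (hU : U ∈ sigmaI X) (hyU : y ∈ U) :
    ∃ i₀ : SigmaIPointedNbhd y, ∀ i, i₀ ≤ i → i.point ∈ U :=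
  ⟨⟨U, y, hU, hyU, hyU⟩, fun i hi => hi i.point_mem⟩

end SigmaIPointedNbhd

lemma TauIOpen.exists_sigmaI_subset (hcont : IContinuous X)
    (hsig : ∀ x : X, {z : X | IBelow x z} ∈ sigmaI X) {U : Set X} (hU : TauIOpen U) {y : X}
    (hy : y ∈ U) : ∃ V ∈ sigmaI X, y ∈ V ∧ V ⊆ U := by
  have hconv : IConv (SigmaIPointedNbhd.point (y := y)) y :=
    iConv_of_eventually_mem hcont hsig fun _ hV hyV =>
      SigmaIPointedNbhd.eventually_point_mem hV hyV
  obtain ⟨i₀, hi₀⟩ := hU _ SigmaIPointedNbhd.directed _ y hy hconv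
  exact ⟨i₀.nbhd, i₀.nbhd_mem, i₀.mem_nbhd,
    fun z hz => hi₀ ⟨i₀.nbhd, z, i₀.nbhd_mem, i₀.mem_nbhd, hz⟩
      (SigmaIPointedNbhd.le_iff.2 subset_rfl)⟩

end

theorem stmt16_general {X : Type u} [TopologicalSpace X]
    (hcont : IContinuous X)
    (hsig : ∀ x : X, {z : X | IBelow x z} ∈ sigmaI X) :
    (∀ (ι : Type u) [Preorder ι] [Nonempty ι],
      (∀ i j : ι, ∃ k : ι, i ≤ k ∧ j ≤ k) →
      ∀ (x : ι → X) (y : X),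
        IConv x y ↔
          ∀ U ∈ sigmaI X, y ∈ U → ∃ i₀ : ι, ∀ i : ι, i₀ ≤ i → x i ∈ U) ∧
    (∀ U : Set X, TauIOpen U ↔ ∃ S ⊆ sigmaI X, U = ⋃₀ S) := by
  refine ⟨fun ι _ _ _ x y => ⟨fun h _ hU hyU => h.eventually_mem hU hyU,
    iConv_of_eventually_mem hcont hsig⟩, fun U => ⟨fun hU => ?_, ?_⟩⟩
  · refine ⟨{V | V ∈ sigmaI X ∧ V ⊆ U}, fun V hV => hV.1, subset_antisymm (fun y hy => ?_) ?_⟩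
    · obtain ⟨V, hV, hyV, hVU⟩ := hU.exists_sigmaI_subset hcont hsig hy
      exact ⟨V, ⟨hV, hVU⟩, hyV⟩
    · rintro z ⟨V, ⟨-, hVU⟩, hzV⟩
      exact hVU hzV
  · rintro ⟨S, hS, rfl⟩
    exact tauIOpen_sUnion hS

/-- If `X` is I-continuous with `↟_I x ∈ σ_I` for all `x`, then (a) I-convergence coincides
with eventual membership in all σ_I-sets containing the limit, and (b) the τ_I-open sets
are exactly the unions of members of σ_I. -/
theorem stmt16 {X : Type u} [TopologicalSpace X] [T0Space X]
    (hcont : IContinuous X)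
    (hsig : ∀ x : X, {z : X | IBelow x z} ∈ sigmaI X) :
    (∀ (ι : Type u) [Preorder ι] [Nonempty ι],
      (∀ i j : ι, ∃ k : ι, i ≤ k ∧ j ≤ k) →
      ∀ (x : ι → X) (y : X),
        IConv x y ↔
          ∀ U ∈ sigmaI X, y ∈ U → ∃ i₀ : ι, ∀ i : ι, i₀ ≤ i → x i ∈ U) ∧
    (∀ U : Set X, TauIOpen U ↔ ∃ S ⊆ sigmaI X, U = ⋃₀ S) :=
  stmt16_general hcont hsig
end
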